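/- For X ~ McN(a,b,c,0,1), the random variable V = Φ(X)^c has the Beta(a,b) distribution; consequently E[log V] = ψ(a) - ψ(a+b), where ψ is the digamma function. -/

import Mathlib

open Real MeasureTheory

noncomputable def betaFn (a b : ℝ) : ℝ := ∫ t in (0:ℝ)..1, t ^ (a-1) * (1-t) ^ (b-1)

noncomputable def gaussPdf (x : ℝ) : ℝ := (Real.sqrt (2 * Real.pi))⁻¹ * Real.exp (-x^2/2)

noncomputable def stdNormCdf (x : ℝ) : ℝ := ∫ t in Set.Iic x, gaussPdf t

noncomputable def mcNStdPdf (a b c x : ℝ) : ℝ :=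
  (c / betaFn a b) * gaussPdf x * stdNormCdf x ^ (a*c - 1) * (1 - stdNormCdf x ^ c) ^ (b - 1)

noncomputable def betaPdf (a b v : ℝ) : ℝ :=
  if v ∈ Set.Ioo (0:ℝ) 1 then (1 / betaFn a b) * v ^ (a-1) * (1-v) ^ (b-1) else 0

/-- digamma function -/
noncomputable def digamma (x : ℝ) : ℝ := deriv (fun t => Real.log (Real.Gamma t)) x

open Set Filter Topology ProbabilityTheory

/-! `g = Φ ^ c` is a strictly increasing differentiable bijection `ℝ → (0, 1)` with
`g' = c φ Φ ^ (c - 1)`, and the McN density is exactly `g'(x) · β_{a,b}(g(x))`; the one-dimensional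
change of variables `v = g(x)` therefore pushes it forward to the Beta(a, b) density. Consequently
`E[log V] = B(a, b)⁻¹ ∫₀¹ t ^ (a - 1) log t (1 - t) ^ (b - 1) dt = ∂ₐ log B(a, b)`, computed by
differentiating under the integral sign and using `B(a, b) = Γ(a) Γ(b) / Γ(a + b)`. -/

lemma range_eq_Ioo_of_tendsto {f : ℝ → ℝ} (hf : Continuous f) {l u : ℝ}
    (hbot : Tendsto f atBot (𝓝 l)) (htop : Tendsto f atTop (𝓝 u)) (hmem : ∀ x, f x ∈ Ioo l u) :
    range f = Ioo l u := by
  refine (range_subset_iff.2 hmem).antisymm fun y hy ↦ mem_range_of_exists_le_of_exists_ge hf ?_ ?_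
  · exact ((hbot.eventually_lt_const hy.1).exists).imp fun _ ↦ le_of_lt
  · exact ((htop.eventually_const_lt hy.2).exists).imp fun _ ↦ le_of_lt

theorem map_withDensity_abs_deriv_mul {g g' : ℝ → ℝ} (hg : ∀ x, HasDerivAt g (g' x) x)
    (hinj : Function.Injective g) {f : ℝ → ENNReal} (hf : ∀ y ∉ range g, f y = 0) :
    (volume.withDensity fun x ↦ ENNReal.ofReal |g' x| * f (g x)).map g = volume.withDensity f := by
  have he : MeasurableEmbedding g :=
    (continuous_iff_continuousAt.2 fun x ↦ (hg x).continuousAt).measurableEmbedding hinj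
  ext A hA
  rw [he.map_apply, withDensity_apply _ (he.measurable hA), withDensity_apply _ hA,
    ← lintegral_image_eq_lintegral_abs_deriv_mul (he.measurable hA)
      (fun x _ ↦ (hg x).hasDerivWithinAt) hinj.injOn, image_preimage_eq_inter_range,
    inter_comm, ← Measure.restrict_restrict he.measurableSet_range]
  exact setLIntegral_eq_of_support_subset fun y hy ↦ not_imp_comm.1 (hf y) hy

theorem integral_withDensity_ofReal {X E : Type*} [MeasurableSpace X] [NormedAddCommGroup E]
    [NormedSpace ℝ E] {μ : Measure X} {f : X → ℝ} (hf : AEMeasurable f μ) (hf₀ : ∀ x, 0 ≤ f x)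
    (g : X → E) : ∫ x, g x ∂μ.withDensity (fun x ↦ ENNReal.ofReal (f x)) = ∫ x, f x • g x ∂μ := by
  rw [integral_withDensity_eq_integral_toReal_smul₀ hf.ennreal_ofReal
    (.of_forall fun _ ↦ ENNReal.ofReal_lt_top)]
  simp only [ENNReal.toReal_ofReal (hf₀ _)]

lemma gaussPdf_eq_gaussianPDFReal : gaussPdf = gaussianPDFReal 0 1 := by
  ext x
  simp [gaussPdf, gaussianPDFReal]

lemma gaussPdf_pos (x : ℝ) : 0 < gaussPdf x :=
  gaussPdf_eq_gaussianPDFReal ▸ gaussianPDFReal_pos 0 1 x one_ne_zero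

lemma continuous_gaussPdf : Continuous gaussPdf := by
  unfold gaussPdf
  fun_prop

lemma stdNormCdf_eq_cdf : stdNormCdf = cdf (gaussianReal 0 1) := by
  ext x
  rw [cdf_eq_real, measureReal_def, gaussianReal_apply_eq_integral _ one_ne_zero,
    ENNReal.toReal_ofReal (setIntegral_nonneg measurableSet_Iic fun t _ ↦
      gaussianPDFReal_nonneg 0 1 t), stdNormCdf, gaussPdf_eq_gaussianPDFReal]

lemma hasDerivAt_stdNormCdf (x : ℝ) : HasDerivAt stdNormCdf (gaussPdf x) x := by
  have hint : Integrable gaussPdf := gaussPdf_eq_gaussianPDFReal ▸ integrable_gaussianPDFReal 0 1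
  have hsplit : stdNormCdf = fun y ↦ stdNormCdf 0 + ∫ t in (0 : ℝ)..y, gaussPdf t := by
    ext y
    rw [← intervalIntegral.integral_Iic_sub_Iic hint.integrableOn hint.integrableOn, stdNormCdf,
      stdNormCdf, add_sub_cancel]
  rw [hsplit]
  exact (intervalIntegral.integral_hasDerivAt_right hint.intervalIntegrable
    (continuous_gaussPdf.stronglyMeasurableAtFilter _ _)
    continuous_gaussPdf.continuousAt).const_add _

lemma continuous_stdNormCdf : Continuous stdNormCdf :=
  continuous_iff_continuousAt.2 fun x ↦ (hasDerivAt_stdNormCdf x).continuousAt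

lemma strictMono_stdNormCdf : StrictMono stdNormCdf :=
  strictMono_of_deriv_pos fun x ↦ (hasDerivAt_stdNormCdf x).deriv ▸ gaussPdf_pos x

lemma stdNormCdf_mem_Ioo (x : ℝ) : stdNormCdf x ∈ Ioo (0 : ℝ) 1 := by
  have hmono := strictMono_stdNormCdf
  rw [stdNormCdf_eq_cdf] at hmono ⊢
  exact ⟨(cdf_nonneg _ (x - 1)).trans_lt (hmono (by linarith)),
    (hmono (by linarith : x < x + 1)).trans_le (cdf_le_one _ _)⟩

lemma betaIntegrand_ofReal {p q t : ℝ} (ht : t ∈ Icc (0 : ℝ) 1) :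
    ((t ^ (p - 1) * (1 - t) ^ (q - 1) : ℝ) : ℂ)
      = (t : ℂ) ^ ((p : ℂ) - 1) * (1 - (t : ℂ)) ^ ((q : ℂ) - 1) := by
  rw [Complex.ofReal_mul, Complex.ofReal_cpow ht.1, Complex.ofReal_cpow (sub_nonneg.2 ht.2)]
  push_cast
  rfl

lemma intervalIntegrable_betaIntegrand {p q : ℝ} (hp : 0 < p) (hq : 0 < q) :
    IntervalIntegrable (fun t : ℝ ↦ t ^ (p - 1) * (1 - t) ^ (q - 1)) volume 0 1 := by
  have hC := Complex.betaIntegral_convergent (u := p) (v := q) (by simpa) (by simpa)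
  rw [intervalIntegrable_iff_integrableOn_Icc_of_le zero_le_one] at hC ⊢
  have hR : IntegrableOn (fun t : ℝ ↦ ((t ^ (p - 1) * (1 - t) ^ (q - 1) : ℝ) : ℂ)) (Icc 0 1) :=
    hC.congr_fun (fun t ht ↦ (betaIntegrand_ofReal ht).symm) measurableSet_Icc
  simpa [IntegrableOn] using hR.re

lemma betaFn_eq_Gamma {a b : ℝ} (ha : 0 < a) (hb : 0 < b) :
    betaFn a b = Real.Gamma a * Real.Gamma b / Real.Gamma (a + b) := by
  have hB : (betaFn a b : ℂ) = Complex.betaIntegral a b := by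
    rw [betaFn, ← intervalIntegral.integral_ofReal, Complex.betaIntegral]
    refine intervalIntegral.integral_congr fun t ht ↦ betaIntegrand_ofReal ?_
    rwa [uIcc_of_le zero_le_one] at ht
  have hG := Complex.Gamma_mul_Gamma_eq_betaIntegral (s := a) (t := b) (by simpa) (by simpa)
  rw [← hB, ← Complex.ofReal_add, Complex.Gamma_ofReal, Complex.Gamma_ofReal,
    Complex.Gamma_ofReal, ← Complex.ofReal_mul, ← Complex.ofReal_mul, Complex.ofReal_inj] at hG
  rw [hG, mul_div_cancel_left₀ _ (Real.Gamma_pos_of_pos (add_pos ha hb)).ne']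

lemma betaFn_pos {a b : ℝ} (ha : 0 < a) (hb : 0 < b) : 0 < betaFn a b := by
  rw [betaFn_eq_Gamma ha hb]
  have := Real.Gamma_pos_of_pos (add_pos ha hb)
  have := Real.Gamma_pos_of_pos ha
  have := Real.Gamma_pos_of_pos hb
  positivity

lemma abs_rpow_mul_log_le {t r s ε : ℝ} (ht₀ : 0 < t) (ht₁ : t ≤ 1) (hε : 0 < ε) (hrs : r ≤ s) :
    |t ^ s * Real.log t| ≤ t ^ (r - ε) / ε := by
  have hlog := Real.abs_log_mul_self_rpow_lt t ε ht₀ ht₁ hε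
  calc |t ^ s * Real.log t| = t ^ (s - ε) * |Real.log t * t ^ ε| := by
        rw [abs_mul, abs_mul, abs_of_pos (Real.rpow_pos_of_pos ht₀ _),
          abs_of_pos (Real.rpow_pos_of_pos ht₀ _), Real.rpow_sub ht₀]
        field_simp
    _ ≤ t ^ (r - ε) * (1 / ε) :=
        mul_le_mul (Real.rpow_le_rpow_of_exponent_ge ht₀ ht₁ (by linarith)) hlog.le
          (abs_nonneg _) (Real.rpow_nonneg ht₀.le _)
    _ = t ^ (r - ε) / ε := by ring

lemma hasDerivAt_betaFn_left {a b : ℝ} (ha : 0 < a) (hb : 0 < b) :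
    HasDerivAt (fun s ↦ betaFn s b)
      (∫ t in (0 : ℝ)..1, t ^ (a - 1) * Real.log t * (1 - t) ^ (b - 1)) a := by
  have hball : Metric.ball a (a / 4) ∈ 𝓝 a := Metric.ball_mem_nhds a (by positivity)
  refine (intervalIntegral.hasDerivAt_integral_of_dominated_loc_of_deriv_le
    (F' := fun s t ↦ t ^ (s - 1) * Real.log t * (1 - t) ^ (b - 1))
    (bound := fun t ↦ t ^ (a / 2 - 1) * (1 - t) ^ (b - 1) / (a / 4)) hball
    (.of_forall fun s ↦ by fun_prop) (intervalIntegrable_betaIntegrand ha hb)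
    (by fun_prop) (.of_forall fun t ht s hs ↦ ?_)
    ((intervalIntegrable_betaIntegrand (half_pos ha) hb).div_const _)
    (.of_forall fun t ht s _ ↦ ?_)).2
  · -- on `|s - a| < a / 4`, the factor `t ^ (a / 4)` absorbs the logarithm
    rw [uIoc_of_le zero_le_one] at ht
    rw [Metric.mem_ball, Real.dist_eq, abs_lt] at hs
    have hlog := abs_rpow_mul_log_le (s := s - 1) (r := 3 * a / 4 - 1) ht.1 ht.2
      (by positivity : 0 < a / 4) (by linarith)
    rw [show 3 * a / 4 - 1 - a / 4 = a / 2 - 1 by ring] at hlog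
    have h1t : 0 ≤ (1 - t) ^ (b - 1) := Real.rpow_nonneg (sub_nonneg.2 ht.2) _
    rw [Real.norm_eq_abs, abs_mul, abs_of_nonneg h1t, mul_div_right_comm]
    exact mul_le_mul_of_nonneg_right hlog h1t
  · rw [uIoc_of_le zero_le_one] at ht
    exact (((Real.hasStrictDerivAt_const_rpow ht.1 (s - 1)).hasDerivAt.comp s
      ((hasDerivAt_id s).sub_const 1)).mul_const _).congr_deriv (by simp)

lemma hasDerivAt_log_Gamma {x : ℝ} (hx : 0 < x) :
    HasDerivAt (fun t ↦ Real.log (Real.Gamma t)) (digamma x) x := by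
  refine DifferentiableAt.hasDerivAt (.log (Real.differentiableAt_Gamma fun m ↦ ?_)
    (Real.Gamma_pos_of_pos hx).ne')
  linarith [(Nat.cast_nonneg m : (0 : ℝ) ≤ m)]

lemma integral_rpow_mul_log_mul_rpow {a b : ℝ} (ha : 0 < a) (hb : 0 < b) :
    ∫ t in (0 : ℝ)..1, t ^ (a - 1) * Real.log t * (1 - t) ^ (b - 1)
      = betaFn a b * (digamma a - digamma (a + b)) := by
  have hB := betaFn_pos ha hb
  have hlogB : (fun s ↦ Real.log (betaFn s b)) =ᶠ[𝓝 a] fun s ↦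
      Real.log (Real.Gamma s) + Real.log (Real.Gamma b) - Real.log (Real.Gamma (s + b)) := by
    filter_upwards [Ioi_mem_nhds ha] with s (hs : 0 < s)
    rw [betaFn_eq_Gamma hs hb, Real.log_div (by positivity) (by positivity),
      Real.log_mul (by positivity) (by positivity)]
  have hderiv : HasDerivAt (fun s ↦ Real.log (betaFn s b)) (digamma a - digamma (a + b)) a := by
    refine HasDerivAt.congr_of_eventuallyEq ?_ hlogB
    exact ((hasDerivAt_log_Gamma ha).add_const _).sub
      ((hasDerivAt_log_Gamma (add_pos ha hb)).comp_add_const a b)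
  have := ((hasDerivAt_betaFn_left ha hb).log hB.ne').unique hderiv
  rw [← this, mul_div_cancel₀ _ hB.ne']

lemma betaPdf_nonneg {a b : ℝ} (ha : 0 < a) (hb : 0 < b) (v : ℝ) : 0 ≤ betaPdf a b v := by
  unfold betaPdf
  split_ifs with hv
  · have := betaFn_pos ha hb
    have := sub_pos.2 hv.2
    have := hv.1
    positivity
  · exact le_rfl

lemma measurable_betaPdf (a b : ℝ) : Measurable (betaPdf a b) :=
  Measurable.ite measurableSet_Ioo (by fun_prop) measurable_const

lemma integral_betaPdf_mul_log {a b : ℝ} (ha : 0 < a) (hb : 0 < b) :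
    ∫ v, betaPdf a b v * Real.log v = digamma a - digamma (a + b) := by
  have hind : (fun v ↦ betaPdf a b v * Real.log v) = (Ioo 0 1).indicator
      fun v ↦ (betaFn a b)⁻¹ * (v ^ (a - 1) * Real.log v * (1 - v) ^ (b - 1)) := by
    ext v
    by_cases hv : v ∈ Ioo (0 : ℝ) 1
    · rw [betaPdf, if_pos hv, indicator_of_mem hv]
      ring
    · rw [betaPdf, if_neg hv, indicator_of_notMem hv, zero_mul]
  rw [hind, integral_indicator measurableSet_Ioo, ← integral_Ioc_eq_integral_Ioo,
    ← intervalIntegral.integral_of_le zero_le_one, intervalIntegral.integral_const_mul,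
    integral_rpow_mul_log_mul_rpow ha hb, inv_mul_cancel_left₀ (betaFn_pos ha hb).ne']

lemma hasDerivAt_stdNormCdf_rpow (c x : ℝ) :
    HasDerivAt (fun x ↦ stdNormCdf x ^ c) (gaussPdf x * c * stdNormCdf x ^ (c - 1)) x :=
  (hasDerivAt_stdNormCdf x).rpow_const (.inl (stdNormCdf_mem_Ioo x).1.ne')

lemma continuous_stdNormCdf_rpow (c : ℝ) : Continuous fun x ↦ stdNormCdf x ^ c :=
  continuous_stdNormCdf.rpow_const fun x ↦ .inl (stdNormCdf_mem_Ioo x).1.ne'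

lemma measurable_mcNStdPdf (a b c : ℝ) : Measurable (mcNStdPdf a b c) := by
  have := continuous_gaussPdf.measurable
  have := continuous_stdNormCdf.measurable
  unfold mcNStdPdf
  fun_prop

section Transform

variable {c : ℝ}

lemma stdNormCdf_rpow_mem_Ioo (hc : 0 < c) (x : ℝ) : stdNormCdf x ^ c ∈ Ioo (0 : ℝ) 1 :=
  ⟨Real.rpow_pos_of_pos (stdNormCdf_mem_Ioo x).1 c,
    Real.rpow_lt_one (stdNormCdf_mem_Ioo x).1.le (stdNormCdf_mem_Ioo x).2 hc⟩

lemma strictMono_stdNormCdf_rpow (hc : 0 < c) : StrictMono fun x ↦ stdNormCdf x ^ c :=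
  fun _ _ hxy ↦ Real.rpow_lt_rpow (stdNormCdf_mem_Ioo _).1.le (strictMono_stdNormCdf hxy) hc

lemma range_stdNormCdf_rpow (hc : 0 < c) : range (fun x ↦ stdNormCdf x ^ c) = Ioo 0 1 := by
  have hcdf := stdNormCdf_eq_cdf ▸ tendsto_cdf_atBot (gaussianReal 0 1)
  have hcdf' := stdNormCdf_eq_cdf ▸ tendsto_cdf_atTop (gaussianReal 0 1)
  refine range_eq_Ioo_of_tendsto (continuous_stdNormCdf_rpow c) ?_ ?_
    (stdNormCdf_rpow_mem_Ioo hc)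
  · simpa [Real.zero_rpow hc.ne'] using hcdf.rpow_const (.inr hc.le)
  · simpa using hcdf'.rpow_const (.inl one_ne_zero)

lemma mcNStdPdf_eq_mul_betaPdf (a b : ℝ) (hc : 0 < c) (x : ℝ) :
    mcNStdPdf a b c x
      = gaussPdf x * c * stdNormCdf x ^ (c - 1) * betaPdf a b (stdNormCdf x ^ c) := by
  have hΦ := (stdNormCdf_mem_Ioo x).1
  rw [betaPdf, if_pos (stdNormCdf_rpow_mem_Ioo hc x), mcNStdPdf, ← Real.rpow_mul hΦ.le,
    show a * c - 1 = (c - 1) + c * (a - 1) by ring, Real.rpow_add hΦ]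
  ring

lemma map_withDensity_mcNStdPdf (a b : ℝ) (hc : 0 < c) :
    Measure.map (fun x ↦ stdNormCdf x ^ c)
        ((volume : Measure ℝ).withDensity fun x ↦ ENNReal.ofReal (mcNStdPdf a b c x))
      = (volume : Measure ℝ).withDensity fun v ↦ ENNReal.ofReal (betaPdf a b v) := by
  have hdensity : (fun x ↦ ENNReal.ofReal (mcNStdPdf a b c x)) = fun x ↦
      ENNReal.ofReal |gaussPdf x * c * stdNormCdf x ^ (c - 1)|
        * ENNReal.ofReal (betaPdf a b (stdNormCdf x ^ c)) := by
    ext x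
    have := gaussPdf_pos x
    have := (stdNormCdf_mem_Ioo x).1
    rw [mcNStdPdf_eq_mul_betaPdf a b hc, ENNReal.ofReal_mul (by positivity),
      abs_of_pos (by positivity)]
  rw [hdensity]
  refine map_withDensity_abs_deriv_mul (f := fun v ↦ ENNReal.ofReal (betaPdf a b v))
    (hasDerivAt_stdNormCdf_rpow c)
    (strictMono_stdNormCdf_rpow hc).injective fun v hv ↦ ?_
  rw [range_stdNormCdf_rpow hc] at hv
  rw [betaPdf, if_neg hv, ENNReal.ofReal_zero]

lemma mcNStdPdf_nonneg {a b : ℝ} (ha : 0 < a) (hb : 0 < b) (hc : 0 < c) (x : ℝ) :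
    0 ≤ mcNStdPdf a b c x := by
  have := gaussPdf_pos x
  have := (stdNormCdf_mem_Ioo x).1
  have := betaPdf_nonneg ha hb (stdNormCdf x ^ c)
  rw [mcNStdPdf_eq_mul_betaPdf a b hc]
  positivity

end Transform

/-- If X ~ McN(a,b,c,0,1) then V = Φ(X)^c ~ Beta(a,b), and
E[log V] = ψ(a) - ψ(a+b). -/
theorem mcN_transform_is_beta (a b c : ℝ) (ha : 0 < a) (hb : 0 < b) (hc : 0 < c) :
    Measure.map (fun x => stdNormCdf x ^ c)
        ((volume : Measure ℝ).withDensity (fun x => ENNReal.ofReal (mcNStdPdf a b c x)))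
      = (volume : Measure ℝ).withDensity (fun v => ENNReal.ofReal (betaPdf a b v))
    ∧ ∫ x : ℝ, mcNStdPdf a b c x * Real.log (stdNormCdf x ^ c)
        = digamma a - digamma (a + b) := by
  have hmap := map_withDensity_mcNStdPdf a b hc
  refine ⟨hmap, ?_⟩
  calc ∫ x, mcNStdPdf a b c x * Real.log (stdNormCdf x ^ c)
      = ∫ v, Real.log v ∂(volume.withDensity fun x ↦ ENNReal.ofReal (mcNStdPdf a b c x)).map
          fun x ↦ stdNormCdf x ^ c := by
        rw [integral_map (continuous_stdNormCdf_rpow c).aemeasurable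
            Real.measurable_log.aestronglyMeasurable,
          integral_withDensity_ofReal (measurable_mcNStdPdf a b c).aemeasurable
            (mcNStdPdf_nonneg ha hb hc)]
        simp only [smul_eq_mul]
    _ = ∫ v, betaPdf a b v * Real.log v := by
        rw [hmap, integral_withDensity_ofReal (measurable_betaPdf a b).aemeasurable
          (betaPdf_nonneg ha hb)]
        simp only [smul_eq_mul]
    _ = digamma a - digamma (a + b) := integral_betaPdf_mul_log ha hb
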